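/- arXiv:1707.05437 — 2 statements merged into one kernel-verified Lean document; each statement's English description precedes it below -/
import Mathlib

section
/- Region symmetry: define region A as the set of pairs (α₁, α₂) of reals with 1/4 ≤ α₁ ≤ 2/5 and (1−α₁)/3 ≤ α₂ ≤ min(α₁, (3δ−1)/2, 1−2α₁), and region B as the set of pairs (α₁, α₂) with (3−3δ)/4 ≤ α₁ ≤ 1/2 and max(α₁/2, 1−2α₁) ≤ α₂ ≤ min((3δ−1)/2, (1−α₁)/2). Then for δ with 0.524 < δ ≤ 1, (α₁, α₂) ∈ A if and only if (1 − α₁ − α₂, α₂) ∈ B. -/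
/-!
Under `β = 1 - α₁ - α₂`, i.e. `α₁ + α₂ + β = 1`, the four constraints of `A` on `α₂` translate one
by one into the four constraints of `B` on `α₂`. The remaining box constraints, on `α₁` in `A` and
on `β` in `B`, are implied by the other four in each region, so the regions correspond exactly.
-/

lemma alpha_bounds_of_constraintsA {c α₁ α₂ : ℝ}
    (h : (1 - α₁)/3 ≤ α₂ ∧ α₂ ≤ min α₁ (min c (1 - 2*α₁))) :
    1/4 ≤ α₁ ∧ α₁ ≤ 2/5 := by
  obtain ⟨hlow, hα₁, -, hsum⟩ : (1 - α₁)/3 ≤ α₂ ∧ α₂ ≤ α₁ ∧ α₂ ≤ c ∧ α₂ ≤ 1 - 2*α₁ := by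
    simpa only [le_min_iff] using h
  constructor <;> linarith

lemma beta_bounds_of_constraintsB {δ β α₂ : ℝ}
    (h : max (β/2) (1 - 2*β) ≤ α₂ ∧ α₂ ≤ min ((3*δ - 1)/2) ((1 - β)/2)) :
    (3 - 3*δ)/4 ≤ β ∧ β ≤ 1/2 := by
  obtain ⟨⟨hhalf, hsum⟩, hδ, hβ⟩ :
      (β/2 ≤ α₂ ∧ 1 - 2*β ≤ α₂) ∧ α₂ ≤ (3*δ - 1)/2 ∧ α₂ ≤ (1 - β)/2 := by
    simpa only [max_le_iff, le_min_iff] using h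
  constructor <;> linarith

lemma constraintsA_iff_constraintsB {c α₁ α₂ β : ℝ} (h : α₁ + α₂ + β = 1) :
    ((1 - α₁)/3 ≤ α₂ ∧ α₂ ≤ min α₁ (min c (1 - 2*α₁))) ↔
      (max (β/2) (1 - 2*β) ≤ α₂ ∧ α₂ ≤ min c ((1 - β)/2)) := by
  have hα₁ : α₁ = 1 - α₂ - β := by linarith
  subst hα₁
  simp only [le_min_iff, max_le_iff]
  constructor
  · rintro ⟨hlow, hβ, hc, hsum⟩
    exact ⟨⟨by linarith, by linarith⟩, hc, by linarith⟩
  · rintro ⟨⟨hhalf, hsum⟩, hc, hβ⟩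
    exact ⟨by linarith, by linarith, hc, by linarith⟩

theorem region_A_B_symmetry_general (δ : ℝ) (α₁ α₂ : ℝ) :
    (1/4 ≤ α₁ ∧ α₁ ≤ 2/5 ∧ (1 - α₁)/3 ≤ α₂ ∧
        α₂ ≤ min α₁ (min ((3*δ - 1)/2) (1 - 2*α₁))) ↔
    ((3 - 3*δ)/4 ≤ 1 - α₁ - α₂ ∧ 1 - α₁ - α₂ ≤ 1/2 ∧
        max ((1 - α₁ - α₂)/2) (1 - 2*(1 - α₁ - α₂)) ≤ α₂ ∧
        α₂ ≤ min ((3*δ - 1)/2) ((1 - (1 - α₁ - α₂))/2)) := by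
  have hcore := constraintsA_iff_constraintsB (c := (3*δ - 1)/2) (α₁ := α₁) (α₂ := α₂)
    (β := 1 - α₁ - α₂) (by ring)
  constructor
  · rintro ⟨-, -, hA⟩
    have hB := hcore.mp hA
    obtain ⟨hlow, hhigh⟩ := beta_bounds_of_constraintsB hB
    exact ⟨hlow, hhigh, hB⟩
  · rintro ⟨-, -, hB⟩
    have hA := hcore.mpr hB
    obtain ⟨hlow, hhigh⟩ := alpha_bounds_of_constraintsA hA
    exact ⟨hlow, hhigh, hA⟩

/-- Region symmetry: `(α₁, α₂) ∈ A` iff `(1 − α₁ − α₂, α₂) ∈ B`, for the regions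
`A`, `B` from the final decomposition, where `0.524 < δ ≤ 1`. -/
theorem region_A_B_symmetry (δ : ℝ) (hδ₁ : 0.524 < δ) (hδ₂ : δ ≤ 1) (α₁ α₂ : ℝ) :
    (1/4 ≤ α₁ ∧ α₁ ≤ 2/5 ∧ (1 - α₁)/3 ≤ α₂ ∧
        α₂ ≤ min α₁ (min ((3*δ - 1)/2) (1 - 2*α₁))) ↔
    ((3 - 3*δ)/4 ≤ 1 - α₁ - α₂ ∧ 1 - α₁ - α₂ ≤ 1/2 ∧
        max ((1 - α₁ - α₂)/2) (1 - 2*(1 - α₁ - α₂)) ≤ α₂ ∧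
        α₂ ≤ min ((3*δ - 1)/2) ((1 - (1 - α₁ - α₂))/2)) :=
  region_A_B_symmetry_general δ α₁ α₂
end

section
/- Let h ≥ 1, and define h = ⌈(1/2 − α)/(2δ − 1)⌉ for α ∈ [0, 1/2] and δ ∈ (1/2, 1]. Define α* = max((2h(1−δ) − α)/(2h−1), (2(h−1)δ + α)/(2h−1)). Then 1 − δ ≤ α* ≤ 1/2. -/
/-! Write `x = (1/2 - α)/(2δ - 1)`, so that `h - 1 < x ≤ h` and `h ≥ 1`. The two candidates for `α*`
sum to `2(h - δ)/(2h - 1) ≥ 2(1 - δ)`, which gives the lower bound. Each candidate is at most `1/2`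
exactly when `x ≤ h`, resp. `h - 1 ≤ x`: this is the defining property of the ceiling. -/

section AlphaStar

variable {α δ h : ℝ}

theorem one_sub_le_max_div (hδ : 1/2 ≤ δ) (hh : 1 ≤ h) :
    1 - δ ≤ max ((2*h*(1 - δ) - α) / (2*h - 1)) ((2*(h - 1)*δ + α) / (2*h - 1)) := by
  have hsum : 2*(1 - δ) ≤ (2*h*(1 - δ) - α) / (2*h - 1) + (2*(h - 1)*δ + α) / (2*h - 1) := by
    rw [← add_div, le_div_iff₀ (by linarith)]
    nlinarith [mul_nonneg (sub_nonneg.mpr hh) (sub_nonneg.mpr hδ)]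
  linarith [le_max_left ((2*h*(1 - δ) - α) / (2*h - 1)) ((2*(h - 1)*δ + α) / (2*h - 1)),
    le_max_right ((2*h*(1 - δ) - α) / (2*h - 1)) ((2*(h - 1)*δ + α) / (2*h - 1))]

theorem div_le_half_of_le_mul (hh : 1/2 < h) (hx : 1/2 - α ≤ h * (2*δ - 1)) :
    (2*h*(1 - δ) - α) / (2*h - 1) ≤ 1/2 := by
  rw [div_le_iff₀ (by linarith)]
  linarith

theorem div_le_half_of_sub_one_mul_le (hh : 1/2 < h) (hx : (h - 1) * (2*δ - 1) ≤ 1/2 - α) :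
    (2*(h - 1)*δ + α) / (2*h - 1) ≤ 1/2 := by
  rw [div_le_iff₀ (by linarith)]
  linarith

end AlphaStar

theorem alpha_star_bounds_general (α δ : ℝ) (hα₁ : α < 1/2)
    (hδ₀ : 1/2 < δ) (h : ℕ)
    (hh : h = Nat.ceil ((1/2 - α) / (2*δ - 1))) :
    1 - δ ≤ max ((2*(h : ℝ)*(1 - δ) - α) / (2*(h : ℝ) - 1))
              ((2*((h : ℝ) - 1)*δ + α) / (2*(h : ℝ) - 1)) ∧
    max ((2*(h : ℝ)*(1 - δ) - α) / (2*(h : ℝ) - 1))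
        ((2*((h : ℝ) - 1)*δ + α) / (2*(h : ℝ) - 1)) ≤ 1/2 := by
  have hD : 0 < 2*δ - 1 := by linarith
  have hx : 0 < (1/2 - α) / (2*δ - 1) := div_pos (by linarith) hD
  have h_one : (1 : ℝ) ≤ h := by exact_mod_cast hh ▸ Nat.one_le_ceil_iff.mpr hx
  have h_ge : (1/2 - α) / (2*δ - 1) ≤ h := hh ▸ Nat.le_ceil _
  have h_lt : (h : ℝ) < (1/2 - α) / (2*δ - 1) + 1 := hh ▸ Nat.ceil_lt_add_one hx.le
  refine ⟨one_sub_le_max_div hδ₀.le h_one, max_le ?_ ?_⟩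
  · exact div_le_half_of_le_mul (by linarith) ((div_le_iff₀ hD).mp h_ge)
  · exact div_le_half_of_sub_one_mul_le (by linarith) ((le_div_iff₀ hD).mp (by linarith))

/-- With `h = ⌈(1/2 − α)/(2δ − 1)⌉` and
`α* = max((2h(1−δ) − α)/(2h−1), (2(h−1)δ + α)/(2h−1))`, we have `1 − δ ≤ α* ≤ 1/2`. -/
theorem alpha_star_bounds (α δ : ℝ) (hα₀ : 0 ≤ α) (hα₁ : α < 1/2)
    (hδ₀ : 1/2 < δ) (hδ₁ : δ ≤ 1) (h : ℕ)
    (hh : h = Nat.ceil ((1/2 - α) / (2*δ - 1))) :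
    1 - δ ≤ max ((2*(h : ℝ)*(1 - δ) - α) / (2*(h : ℝ) - 1))
              ((2*((h : ℝ) - 1)*δ + α) / (2*(h : ℝ) - 1)) ∧
    max ((2*(h : ℝ)*(1 - δ) - α) / (2*(h : ℝ) - 1))
        ((2*((h : ℝ) - 1)*δ + α) / (2*(h : ℝ) - 1)) ≤ 1/2 :=
  alpha_star_bounds_general α δ hα₁ hδ₀ h hh
end
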